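/- Let G be a connected graph and H a subgraph of G containing two vertices a, b with d_H(a,b) = d_G(a,b) = 5. If H is 3-induced in G and D_3(H) is connected, then D_3(G) is connected. -/

import Mathlib

open SimpleGraph

/-!
Let `C` be the component of `a` in `D₃(G)`. Since `H` is 3-induced, every edge of `D₃(H)` is an
edge of `D₃(G)`, so `C` contains all of `H`, in particular every vertex of a walk in `H` from `a`
to `b`. A vertex `v` with `d(v, a) ≥ 3` is at distance 3 from a vertex `z` on a geodesic to `a`
with `d(z, a) = d(v, a) - 3`, so by induction it suffices to treat `d(v, a) ≤ 2`. Then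
`d(v, b) ≥ 5 - 2 = 3`, and since `d(v, ·)` changes by at most one along each edge of the walk
from `a` to `b`, some vertex of that walk is at distance exactly 3 from `v`.
-/

/-- The `k`-distance graph of `G`: vertices adjacent iff their distance in `G` is exactly `k`. -/
def distGraph {V : Type*} (G : SimpleGraph V) (k : ℕ) : SimpleGraph V where
  Adj x y := x ≠ y ∧ G.dist x y = k
  symm := ⟨fun x y ⟨h1, h2⟩ => ⟨h1.symm, by rwa [SimpleGraph.dist_comm]⟩⟩
  loopless := ⟨fun x ⟨h, _⟩ => h rfl⟩

namespace SimpleGraph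

variable {V : Type*} {G : SimpleGraph V} {k : ℕ}

lemma distGraph_adj_of_dist_eq (hk : k ≠ 0) {u v : V} (h : G.dist u v = k) :
    (distGraph G k).Adj u v :=
  ⟨by rintro rfl; simp [eq_comm, hk] at h, h⟩

lemma Walk.exists_mem_support_dist_eq {u w : V} (p : G.Walk u w) {v : V}
    (hu : G.dist v u ≤ k) (hw : k ≤ G.dist v w) : ∃ z ∈ p.support, G.dist v z = k := by
  induction p with
  | nil => exact ⟨_, Walk.start_mem_support _, le_antisymm hu hw⟩
  | @cons u u' w h q ih =>
    by_cases huk : G.dist v u = k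
    · exact ⟨u, q.cons h |>.start_mem_support, huk⟩
    · have := h.diff_dist_adj (u := v)
      obtain ⟨z, hz, hzk⟩ := ih (by omega) hw
      exact ⟨z, by simp [hz], hzk⟩

lemma Reachable.exists_dist_eq_and_dist_eq_sub {v a : V} (hr : G.Reachable v a)
    (hk : k ≤ G.dist v a) : ∃ z, G.dist v z = k ∧ G.dist z a = G.dist v a - k := by
  obtain ⟨p, hp⟩ := hr.exists_walk_length_eq_dist
  refine ⟨p.getVert k, ?_, ?_⟩
  · rw [← length_eq_dist_of_subwalk hp (p.isSubwalk_take k), Walk.take_length]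
    omega
  · rw [← length_eq_dist_of_subwalk hp (p.isSubwalk_drop k), Walk.drop_length, hp]

theorem distGraph_connected_of_walk (hG : G.Connected) (hk : k ≠ 0) {a b : V}
    (hab : 2 * k ≤ G.dist a b + 1) (p : G.Walk a b)
    (hp : ∀ z ∈ p.support, (distGraph G k).Reachable z a) : (distGraph G k).Connected := by
  suffices h : ∀ n, ∀ v, G.dist v a = n → (distGraph G k).Reachable v a by
    have := hG.nonempty
    exact .mk fun u v => (h _ u rfl).trans (h _ v rfl).symm
  intro n
  induction n using Nat.strong_induction_on with
  | _ n ih =>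
    intro v hv
    by_cases hkn : k ≤ n
    · obtain ⟨z, hvz, hza⟩ := (hG.preconnected v a).exists_dist_eq_and_dist_eq_sub (hv ▸ hkn)
      exact (distGraph_adj_of_dist_eq hk hvz).reachable.trans (ih _ (by omega) z hza)
    · have hvb : k ≤ G.dist v b := by
        have hav : G.dist a v = n := dist_comm.trans hv
        have := hG.dist_triangle (u := a) (v := v) (w := b)
        omega
      obtain ⟨z, hz, hvz⟩ := p.exists_mem_support_dist_eq (by omega) hvb
      exact (distGraph_adj_of_dist_eq hk hvz).reachable.trans (hp z hz)

lemma Subgraph.distGraph_adj_of_coe {H : G.Subgraph} (hk : k ≠ 0)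
    (hind : ∀ x y : H.verts, G.dist x y ≤ k → H.coe.dist x y = G.dist x y) {x y : H.verts}
    (hxy : (distGraph H.coe k).Adj x y) : (distGraph G k).Adj x y := by
  obtain ⟨hne, hd⟩ := hxy
  obtain ⟨q, hq⟩ := (Reachable.of_dist_ne_zero (hd ▸ hk)).exists_walk_length_eq_dist
  have hle : G.dist x y ≤ k :=
    (dist_le (q.map H.hom)).trans_eq (by rw [Walk.length_map, hq, hd])
  exact ⟨Subtype.coe_injective.ne hne, (hind x y hle).symm.trans hd⟩

end SimpleGraph

/-- If `H ≤ G` is 3-induced, contains vertices `a, b` with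
`d_H(a,b) = d_G(a,b) = 5`, and `D₃(H)` is connected, then `D₃(G)` is connected. -/
theorem stmt_1 {V : Type*} (G : SimpleGraph V) (hG : G.Connected) (H : G.Subgraph)
    (a b : H.verts) (haH : H.coe.dist a b = 5) (haG : G.dist a b = 5)
    (h3ind : ∀ x y : H.verts, G.dist x y ≤ 3 → H.coe.dist x y = G.dist x y)
    (hH : (distGraph H.coe 3).Connected) :
    (distGraph G 3).Connected := by
  have hreach (x : H.verts) : (distGraph G 3).Reachable x a :=
    (hH.preconnected x a).map ⟨Subtype.val, Subgraph.distGraph_adj_of_coe three_ne_zero h3ind⟩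
  obtain ⟨p⟩ := Reachable.of_dist_ne_zero (by omega : H.coe.dist a b ≠ 0)
  have hab : 2 * 3 ≤ G.dist a b + 1 := by omega
  refine distGraph_connected_of_walk hG three_ne_zero hab (p.map H.hom) fun z hz => ?_
  obtain ⟨x, -, rfl⟩ := List.mem_map.mp (Walk.support_map H.hom p ▸ hz)
  exact hreach x
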